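/- Let F be an N×n matrix, G an N×M matrix, Q' a symmetric positive-semidefinite N×N matrix, R' a symmetric positive-semidefinite M×M matrix, and Σ a symmetric positive-definite N×N matrix, and fix x ∈ ℝⁿ. For θ ∈ ℝᴹ define ℓ(θ) = −log E_{v ~ N(0, Σ)}[exp(−½·(F x + G θ + v)ᵀ Q' (F x + G θ + v) − ½·θᵀ R' θ)]. Then ℓ(θ) = ½·(F x + G θ)ᵀ[Σ⁻¹ − (Σ Q' Σ + Σ)⁻¹](F x + G θ) + ½·θᵀ R' θ + ½·log|Q' Σ + I|. In particular, ℓ is a quadratic function of θ with Hessian matrix Gᵀ[Σ⁻¹ − (Σ Q' Σ + Σ)⁻¹]G + R' and linear coefficient vector Gᵀ[Σ⁻¹ − (Σ Q' Σ + Σ)⁻¹]F x. -/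

import Mathlib

open Matrix MeasureTheory

/-- Density of the multivariate Gaussian `N(m, S)` on `ℝᵏ` with respect to Lebesgue measure. -/
noncomputable def gaussianPdf {k : ℕ} (m : Fin k → ℝ) (S : Matrix (Fin k) (Fin k) ℝ)
    (x : Fin k → ℝ) : ℝ :=
  (Real.sqrt ((2 * Real.pi) ^ k * S.det))⁻¹ *
    Real.exp (-(1 / 2) * ((x - m) ⬝ᵥ (S⁻¹ *ᵥ (x - m))))

/-- The multivariate Gaussian probability measure `N(m, S)` on `ℝᵏ`. -/
noncomputable def gaussianMeasure {k : ℕ} (m : Fin k → ℝ) (S : Matrix (Fin k) (Fin k) ℝ) :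
    Measure (Fin k → ℝ) :=
  volume.withDensity (fun x => ENNReal.ofReal (gaussianPdf m S x))

/-!
Against the density of `N(0, Σ)` the integrand is an unnormalised Gaussian kernel in `v` with
precision `W = Σ⁻¹ + Q'` and linear term `-Q' a`, where `a = F x + G θ`. Completing the square gives
`√((2π)ᴺ / det W) · exp (½ (Q' a)ᵀ W⁻¹ (Q' a))`; the normalisations combine through
`det Σ · det W = det (Q' Σ + I)`, and the exponent through
`Q' - Q' W⁻¹ Q' = Σ⁻¹ - (Σ Q' Σ + Σ)⁻¹`. The factor `exp (-½ θᵀ R' θ)` is constant in `v`.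
-/

open Real

section MatrixAlgebra

variable {ι R : Type*} [Fintype ι]

theorem dotProduct_mulVec_comm_of_isSymm [CommSemiring R] {A : Matrix ι ι R} (hA : A.IsSymm)
    (x y : ι → R) : (A *ᵥ x) ⬝ᵥ y = x ⬝ᵥ (A *ᵥ y) := by
  rw [dotProduct_comm, dotProduct_mulVec, ← mulVec_transpose, hA.eq, dotProduct_comm]

theorem inv_sub_inv_mul_mul_add_self [DecidableEq ι] [CommRing R] {S Q : Matrix ι ι R}
    (hS : IsUnit S.det) (hW : IsUnit (S⁻¹ + Q).det) :
    S⁻¹ - (S * Q * S + S)⁻¹ = Q - Q * (S⁻¹ + Q)⁻¹ * Q := by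
  set W := S⁻¹ + Q
  have hQ : Q = W - S⁻¹ := by simp [W]
  have hSQS : S * Q * S + S = S * W * S := by
    rw [hQ, Matrix.mul_sub, Matrix.sub_mul, mul_nonsing_inv S hS, Matrix.one_mul, sub_add_cancel]
  rw [hSQS, Matrix.mul_inv_rev, Matrix.mul_inv_rev, hQ]
  simp only [Matrix.sub_mul, Matrix.mul_sub, Matrix.mul_assoc, nonsing_inv_mul W hW,
    Matrix.mul_one, mul_nonsing_inv W hW, Matrix.one_mul]
  abel

theorem det_mul_det_inv_add [DecidableEq ι] [CommRing R] {S Q : Matrix ι ι R} (hS : IsUnit S.det) :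
    S.det * (S⁻¹ + Q).det = (Q * S + 1).det := by
  rw [← det_mul, Matrix.mul_add, mul_nonsing_inv S hS, det_one_add_mul_comm, add_comm]

end MatrixAlgebra

section Lebesgue

variable {ι : Type*} [Fintype ι]

theorem integral_exp_neg_half_dotProduct_self :
    ∫ u : ι → ℝ, exp (-(1 / 2) * (u ⬝ᵥ u)) = √((2 * π) ^ Fintype.card ι) := by
  have h1 : ∫ t : ℝ, exp (-(1 / 2) * (t * t)) = √(2 * π) := by
    rw [show 2 * π = π / (1 / 2) by ring, ← integral_gaussian]
    simp only [sq]
  simp_rw [dotProduct, Finset.mul_sum, exp_sum]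
  rw [integral_fintype_prod_volume_eq_prod (fun _ t => exp (-(1 / 2) * (t * t)))]
  simp only [h1]
  rw [← sqrt_prod _ (fun _ _ => by positivity), Finset.prod_const, Finset.card_univ]

theorem integral_comp_mulVec [DecidableEq ι] {A : Matrix ι ι ℝ} (hA : A.det ≠ 0)
    (f : (ι → ℝ) → ℝ) : ∫ v, f (A *ᵥ v) = |A.det|⁻¹ * ∫ u, f u := by
  have hemb : MeasurableEmbedding (toLin' A) :=
    (A.toLinearEquiv' (invertibleOfIsUnitDet A (isUnit_iff_ne_zero.2 hA))).toContinuousLinearEquiv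
      |>.toHomeomorph.measurableEmbedding
  change ∫ v, f (toLin' A v) = _
  rw [← hemb.integral_map, map_matrix_volume_pi_eq_smul_volume_pi hA, integral_smul_measure,
    ENNReal.toReal_ofReal (abs_nonneg _), abs_inv, smul_eq_mul]

open scoped MatrixOrder in
theorem integral_exp_neg_half_quadForm_add_dotProduct [DecidableEq ι] {M : Matrix ι ι ℝ}
    (hM : M.PosDef) (b : ι → ℝ) :
    ∫ v, exp (-(1 / 2) * (v ⬝ᵥ (M *ᵥ v)) + b ⬝ᵥ v)
      = √((2 * π) ^ Fintype.card ι / M.det) * exp ((1 / 2) * (b ⬝ᵥ (M⁻¹ *ᵥ b))) := by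
  set A := CFC.sqrt M
  have hA : A.IsSymm := (CFC.sqrt_nonneg M).posSemidef.isHermitian
  have hAA : A * A = M := CFC.sqrt_mul_sqrt_self M hM.posSemidef.nonneg
  have hdetA : A.det = √M.det := by rw [hM.posSemidef.det_sqrt, RCLike.sqrt_real]
  have hdetA_pos : 0 < A.det := hdetA ▸ sqrt_pos.2 hM.det_pos
  set c := A⁻¹ *ᵥ b
  -- completing the square in the coordinates `A *ᵥ v`, where `A = M ^ (1/2)`
  have hsq : ∀ v, -(1 / 2) * (v ⬝ᵥ (M *ᵥ v)) + b ⬝ᵥ v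
      = (1 / 2) * (b ⬝ᵥ (M⁻¹ *ᵥ b)) + -(1 / 2) * ((A *ᵥ v - c) ⬝ᵥ (A *ᵥ v - c)) := by
    intro v
    have hAinv : A * A⁻¹ = 1 := mul_nonsing_inv A (isUnit_iff_ne_zero.2 hdetA_pos.ne')
    have h1 : (A *ᵥ v) ⬝ᵥ (A *ᵥ v) = v ⬝ᵥ (M *ᵥ v) := by
      rw [dotProduct_mulVec_comm_of_isSymm hA, mulVec_mulVec, hAA]
    have h2 : c ⬝ᵥ (A *ᵥ v) = b ⬝ᵥ v := by
      rw [← dotProduct_mulVec_comm_of_isSymm hA, mulVec_mulVec, hAinv, one_mulVec]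
    have h3 : c ⬝ᵥ c = b ⬝ᵥ (M⁻¹ *ᵥ b) := by
      rw [dotProduct_mulVec_comm_of_isSymm hA.inv, mulVec_mulVec, ← Matrix.mul_inv_rev, hAA]
    rw [sub_dotProduct, dotProduct_sub, dotProduct_sub, h1, dotProduct_comm (A *ᵥ v) c, h2, h3]
    ring
  simp_rw [hsq, exp_add, integral_const_mul]
  rw [integral_comp_mulVec hdetA_pos.ne' (fun u => exp (-(1 / 2) * ((u - c) ⬝ᵥ (u - c)))),
    integral_sub_right_eq_self (fun u => exp (-(1 / 2) * (u ⬝ᵥ u))) c,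
    integral_exp_neg_half_dotProduct_self, abs_of_pos hdetA_pos, hdetA,
    sqrt_div' _ hM.det_pos.le]
  ring

end Lebesgue

theorem integral_gaussianMeasure {k : ℕ} (m : Fin k → ℝ) (S : Matrix (Fin k) (Fin k) ℝ)
    (g : (Fin k → ℝ) → ℝ) :
    ∫ v, g v ∂(gaussianMeasure m S) = ∫ v, gaussianPdf m S v * g v := by
  have hpdf : Continuous (gaussianPdf m S) := by
    unfold gaussianPdf
    simp only [dotProduct, mulVec, Pi.sub_apply]
    fun_prop
  rw [gaussianMeasure, integral_withDensity_eq_integral_toReal_smul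
    hpdf.measurable.ennreal_ofReal (by simp)]
  congr 1 with v
  rw [ENNReal.toReal_ofReal (by unfold gaussianPdf; positivity), smul_eq_mul]

theorem integral_exp_neg_half_quadForm_gaussianMeasure {k : ℕ} {Q S : Matrix (Fin k) (Fin k) ℝ}
    (hQ : Q.PosSemidef) (hS : S.PosDef) (a : Fin k → ℝ) :
    ∫ v, exp (-(1 / 2) * ((a + v) ⬝ᵥ (Q *ᵥ (a + v)))) ∂(gaussianMeasure 0 S)
      = (√(Q * S + 1).det)⁻¹ * exp (-(1 / 2) * (a ⬝ᵥ ((S⁻¹ - (S * Q * S + S)⁻¹) *ᵥ a))) := by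
  set W := S⁻¹ + Q
  have hW : W.PosDef := hS.inv.add_posSemidef hQ
  have hQsymm : Q.IsSymm := hQ.isHermitian
  have hpt : ∀ v, gaussianPdf 0 S v * exp (-(1 / 2) * ((a + v) ⬝ᵥ (Q *ᵥ (a + v))))
      = ((√((2 * π) ^ k * S.det))⁻¹ * exp (-(1 / 2) * (a ⬝ᵥ (Q *ᵥ a))))
        * exp (-(1 / 2) * (v ⬝ᵥ (W *ᵥ v)) + (-(Q *ᵥ a)) ⬝ᵥ v) := by
    intro v
    rw [gaussianPdf, sub_zero, mul_assoc, mul_assoc, ← exp_add, ← exp_add]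
    congr 2
    simp only [W, mulVec_add, add_mulVec, dotProduct_add, add_dotProduct, neg_dotProduct,
      dotProduct_mulVec_comm_of_isSymm hQsymm, dotProduct_comm v (Q *ᵥ a)]
    ring
  have hexp : -(1 / 2) * (a ⬝ᵥ (Q *ᵥ a)) + (1 / 2) * (-(Q *ᵥ a) ⬝ᵥ (W⁻¹ *ᵥ -(Q *ᵥ a)))
      = -(1 / 2) * (a ⬝ᵥ ((S⁻¹ - (S * Q * S + S)⁻¹) *ᵥ a)) := by
    rw [inv_sub_inv_mul_mul_add_self (isUnit_iff_ne_zero.2 hS.det_pos.ne')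
      (isUnit_iff_ne_zero.2 hW.det_pos.ne'), sub_mulVec, dotProduct_sub, ← mulVec_mulVec,
      ← mulVec_mulVec, ← dotProduct_mulVec_comm_of_isSymm hQsymm a (W⁻¹ *ᵥ Q *ᵥ a)]
    simp only [mulVec_neg, neg_dotProduct, dotProduct_neg, neg_neg]
    ring
  have hsqrt : (√((2 * π) ^ k * S.det))⁻¹ * √((2 * π) ^ k / W.det) = (√(Q * S + 1).det)⁻¹ := by
    have h2π : 0 < √((2 * π) ^ k) := by positivity
    have hdS : 0 < √S.det := sqrt_pos.2 hS.det_pos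
    have hdW : 0 < √W.det := sqrt_pos.2 hW.det_pos
    have hdet : (Q * S + 1).det = S.det * W.det :=
      (det_mul_det_inv_add (isUnit_iff_ne_zero.2 hS.det_pos.ne')).symm
    rw [hdet, sqrt_div' _ hW.det_pos.le,
      sqrt_mul (by positivity : (0 : ℝ) ≤ (2 * π) ^ k), sqrt_mul hS.det_pos.le]
    field_simp
  rw [integral_gaussianMeasure]
  simp_rw [hpt]
  rw [integral_const_mul, integral_exp_neg_half_quadForm_add_dotProduct hW, Fintype.card_fin,
    ← hexp, exp_add, ← hsqrt]
  ring

theorem leqr_loss_quadratic_general {N n M : ℕ}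
    (F : Matrix (Fin N) (Fin n) ℝ) (G : Matrix (Fin N) (Fin M) ℝ)
    (Q' : Matrix (Fin N) (Fin N) ℝ) (hQ : Q'.PosSemidef)
    (R' : Matrix (Fin M) (Fin M) ℝ)
    (S : Matrix (Fin N) (Fin N) ℝ) (hS : S.PosDef)
    (x : Fin n → ℝ) (θ : Fin M → ℝ) :
    -Real.log (∫ v,
        Real.exp (-(1 / 2) * ((F *ᵥ x + G *ᵥ θ + v) ⬝ᵥ (Q' *ᵥ (F *ᵥ x + G *ᵥ θ + v)))
          - (1 / 2) * (θ ⬝ᵥ (R' *ᵥ θ)))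
        ∂(gaussianMeasure 0 S))
      = (1 / 2) * ((F *ᵥ x + G *ᵥ θ) ⬝ᵥ ((S⁻¹ - (S * Q' * S + S)⁻¹) *ᵥ (F *ᵥ x + G *ᵥ θ)))
        + (1 / 2) * (θ ⬝ᵥ (R' *ᵥ θ))
        + (1 / 2) * Real.log (Q' * S + 1).det := by
  have hdet : 0 < (Q' * S + 1).det := by
    rw [← det_mul_det_inv_add (isUnit_iff_ne_zero.2 hS.det_pos.ne')]
    exact mul_pos hS.det_pos (hS.inv.add_posSemidef hQ).det_pos
  simp_rw [exp_sub, integral_div, integral_exp_neg_half_quadForm_gaussianMeasure hQ hS]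
  rw [log_div (by positivity) (exp_pos _).ne', log_mul (by positivity) (exp_pos _).ne', log_inv,
    log_sqrt hdet.le, log_exp, log_exp]
  ring

/-- **LEQR loss.** The exponential-utility (risk-seeking) loss
`ℓ(θ) = −log E_{v ~ N(0,Σ)}[exp(−½ (Fx + Gθ + v)ᵀ Q' (Fx + Gθ + v) − ½ θᵀ R' θ)]`
equals the quadratic
`½ (Fx + Gθ)ᵀ[Σ⁻¹ − (ΣQ'Σ + Σ)⁻¹](Fx + Gθ) + ½ θᵀ R' θ + ½ log|Q'Σ + I|` in `θ`. -/
theorem leqr_loss_quadratic {N n M : ℕ}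
    (F : Matrix (Fin N) (Fin n) ℝ) (G : Matrix (Fin N) (Fin M) ℝ)
    (Q' : Matrix (Fin N) (Fin N) ℝ) (hQ : Q'.PosSemidef)
    (R' : Matrix (Fin M) (Fin M) ℝ) (hR : R'.PosSemidef)
    (S : Matrix (Fin N) (Fin N) ℝ) (hS : S.PosDef)
    (x : Fin n → ℝ) (θ : Fin M → ℝ) :
    -Real.log (∫ v,
        Real.exp (-(1 / 2) * ((F *ᵥ x + G *ᵥ θ + v) ⬝ᵥ (Q' *ᵥ (F *ᵥ x + G *ᵥ θ + v)))
          - (1 / 2) * (θ ⬝ᵥ (R' *ᵥ θ)))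
        ∂(gaussianMeasure 0 S))
      = (1 / 2) * ((F *ᵥ x + G *ᵥ θ) ⬝ᵥ ((S⁻¹ - (S * Q' * S + S)⁻¹) *ᵥ (F *ᵥ x + G *ᵥ θ)))
        + (1 / 2) * (θ ⬝ᵥ (R' *ᵥ θ))
        + (1 / 2) * Real.log (Q' * S + 1).det :=
  leqr_loss_quadratic_general F G Q' hQ R' S hS x θ
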